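/- Let f, g ∈ L²(μ) and φ_1,…,φ_{N-1} orthonormal in L²(μ) (together with a function φ_0 so that φ_0,…,φ_{N-1} is orthonormal). Then (1/N!) ∫_{X^N} det Φ_{φ_0,f}(x_{1:N}) · det Φ_{φ_1,f}(x_{1:N}) dμ^{⊗N}(x) = ⟨f, φ_0⟩⟨f, φ_1⟩, where Φ_{φ_0,f} (resp. Φ_{φ_1,f}) replaces the first (resp. second) column of Φ(x_{1:N}) by f(x_{1:N}). -/

import Mathlib

/-! Expanding both determinants over permutations and integrating term by term (Fubini) gives
Andréief's identity `∫ det [a_k (x_n)] · det [b_k (x_n)] dμ^N = N! · det [⟨a_k, b_l⟩]`.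
For `a = φ` with `φ₀` replaced by `f` and `b = φ` with `φ₁` replaced by `f`, orthonormality
makes the Gram matrix `⟨a_k, b_l⟩` agree with the identity outside row 0 and column 1, so its
determinant is `⟨f, φ₀⟩ ⟨φ₁, f⟩`.

Since `μ` need not be σ-finite, Fubini is applied on a σ-finite set `S` off which every `a_k`
vanishes (an `L²` function has σ-finite support): the integrand then vanishes off `S^N`, where the
product measure is the product of the restrictions of `μ` to `S`. -/

open MeasureTheory Matrix Set

namespace MeasureTheory.Measure

variable {ι : Type*} [Fintype ι] {α : ι → Type*} [∀ i, MeasurableSpace (α i)]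

theorem pi_univ_pi_le (μ : ∀ i, Measure (α i)) {s : ∀ i, Set (α i)}
    (hs : ∀ i, MeasurableSet (s i)) :
    Measure.pi μ (univ.pi s) ≤ ∏ i, μ i (s i) := by
  rw [Measure.pi_def, toMeasure_apply _ _ (.pi Set.countable_univ fun i _ => hs i)]
  exact OuterMeasure.pi_pi_le _ s

theorem pi_mono {μ ν : ∀ i, Measure (α i)} (h : ∀ i, μ i ≤ ν i) :
    Measure.pi μ ≤ Measure.pi ν := by
  refine Measure.le_iff.2 fun s hs => ?_
  simp only [Measure.pi_def, toMeasure_apply _ _ hs]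
  refine OuterMeasure.le_pi.2 (fun t _ => ?_) s
  exact (OuterMeasure.pi_pi_le _ t).trans (Finset.prod_le_prod' fun i _ => h i (t i))

-- `Measure.tendsto_eval_ae_ae` without σ-finiteness
theorem tendsto_eval_ae_ae' {μ : ∀ i, Measure (α i)} {i : ι} :
    Filter.Tendsto (Function.eval i) (ae (Measure.pi μ)) (ae (μ i)) := fun s hs => by
  classical
  obtain ⟨t, hst, htm, hμt⟩ := exists_measurable_superset_of_null hs
  refine measure_mono_null (Set.preimage_mono hst) ?_
  rw [← univ_pi_update_univ]
  refine nonpos_iff_eq_zero.1 ((pi_univ_pi_le μ fun j => ?_).trans_eq ?_)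
  · rcases eq_or_ne j i with rfl | hj
    · simpa using htm
    · simp [Function.update_of_ne hj]
  · exact Finset.prod_eq_zero (Finset.mem_univ i) (by simpa using hμt)

theorem restrict_univ_pi_eq_pi_restrict (μ : ∀ i, Measure (α i)) {S : ∀ i, Set (α i)}
    (hS : ∀ i, MeasurableSet (S i)) [∀ i, SigmaFinite ((μ i).restrict (S i))] :
    (Measure.pi μ).restrict (univ.pi S) = Measure.pi fun i => (μ i).restrict (S i) := by
  refine (pi_eq fun s hs => ?_).symm
  have hsS : ∀ i, MeasurableSet (s i ∩ S i) := fun i => (hs i).inter (hS i)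
  have hbox : ∏ i, (μ i).restrict (S i) (s i) = ∏ i, μ i (s i ∩ S i) :=
    Finset.prod_congr rfl fun i _ => restrict_apply (hs i)
  rw [restrict_apply (.univ_pi hs), ← Set.pi_inter_distrib, hbox]
  refine le_antisymm (pi_univ_pi_le μ hsS) ?_
  calc ∏ i, μ i (s i ∩ S i)
      = Measure.pi (fun i => (μ i).restrict (S i)) (univ.pi fun i => s i ∩ S i) := by
        rw [pi_pi]
        exact Finset.prod_congr rfl fun i _ => by
          rw [restrict_apply (hsS i), Set.inter_assoc, Set.inter_self]
    _ ≤ Measure.pi μ (univ.pi fun i => s i ∩ S i) :=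
        pi_mono (fun i => restrict_le_self) _

end MeasureTheory.Measure

section

variable {X : Type*} [MeasurableSpace X] {μ : Measure X}

theorem MeasureTheory.sigmaFinite_restrict_iUnion {ι : Type*} [Finite ι] {s : ι → Set X}
    [∀ i, SigmaFinite (μ.restrict (s i))] : SigmaFinite (μ.restrict (⋃ i, s i)) :=
  Measure.sigmaFinite_of_le _ Measure.restrict_iUnion_le

theorem MeasureTheory.MemLp.exists_common_sigmaFinite_support {ι E : Type*} [Finite ι]
    [NormedAddCommGroup E] {p : ENNReal} (hp0 : p ≠ 0) (hp : p ≠ ⊤) {a : ι → X → E}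
    (ha : ∀ k, MemLp (a k) p μ) :
    ∃ S, MeasurableSet S ∧ SigmaFinite (μ.restrict S) ∧
      ∀ k, ∀ᵐ t ∂μ, t ∉ S → a k t = 0 := by
  have hfin k := (ha k).aefinStronglyMeasurable hp0 hp
  have := fun k => (hfin k).sigmaFinite_restrict
  refine ⟨⋃ k, (hfin k).sigmaFiniteSet, .iUnion fun k => (hfin k).measurableSet,
    sigmaFinite_restrict_iUnion, fun k => ?_⟩
  filter_upwards [(ae_restrict_iff' (hfin k).measurableSet.compl).1 (hfin k).ae_eq_zero_compl]
    with t ht htS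
  exact ht fun h => htS (Set.mem_iUnion_of_mem k h)

end

namespace Matrix

theorem updateCol_of_apply {m n X R : Type*} [DecidableEq n] (φ : n → X → R) (x : m → X)
    (j : n) (f : X → R) :
    (of fun i k => φ k (x i)).updateCol j (fun i => f (x i))
      = of fun i k => Function.update φ j f k (x i) := by
  ext i k
  rcases eq_or_ne k j with rfl | hk <;> simp [*]

variable {n R : Type*} [Fintype n] [DecidableEq n] [CommRing R]

theorem det_mul_det_eq_sum_sum (A B : Matrix n n R) :
    A.det * B.det = ∑ σ : Equiv.Perm n, ∑ τ : Equiv.Perm n,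
      ((Equiv.Perm.sign σ : ℤ) : R) * (Equiv.Perm.sign τ : ℤ) *
        ∏ i, A i (σ i) * B i (τ i) := by
  rw [← det_transpose A, ← det_transpose B, det_apply', det_apply', Finset.sum_mul_sum]
  refine Finset.sum_congr rfl fun σ _ => Finset.sum_congr rfl fun τ _ => ?_
  rw [Finset.prod_mul_distrib]
  simp only [transpose_apply]
  ring

theorem sum_sign_mul_prod_perm_eq_sign_mul_det (M : Matrix n n R) (σ : Equiv.Perm n) :
    ∑ τ : Equiv.Perm n, ((Equiv.Perm.sign τ : ℤ) : R) * ∏ i, M (σ i) (τ i)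
      = (Equiv.Perm.sign σ : ℤ) * M.det := by
  rw [← det_permute, ← det_transpose, det_apply']
  rfl

theorem det_eq_mul_of_eq_one_outside_row_col {M : Matrix n n R} {i j : n} (hij : i ≠ j)
    (hM : ∀ c d, c ≠ i → d ≠ j → M c d = (1 : Matrix n n R) c d) :
    M.det = M i i * M j j := by
  rw [det_apply, Finset.sum_eq_single 1 (fun σ _ hσ => ?_) (by simp)]
  · simpa using Fintype.prod_eq_mul i j hij fun c hc => by simpa using hM c c hc.1 hc.2
  suffices ∃ c, c ≠ j ∧ σ c ≠ i ∧ σ c ≠ c by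
    obtain ⟨c, hcj, hci, hc⟩ := this
    rw [Finset.prod_eq_zero (Finset.mem_univ c) (by rw [hM _ _ hci hcj, one_apply_ne hc]),
      smul_zero]
  by_cases hi : σ i = i
  · -- a permutation fixing `i` and every point but `j` would fix `j` as well
    obtain ⟨c, hcj, hc⟩ : ∃ c, c ≠ j ∧ σ c ≠ c := by
      by_contra! h
      refine hσ (Equiv.ext fun c => ?_)
      rcases eq_or_ne c j with rfl | hcj
      · by_contra hc
        exact hc (σ.injective (h _ hc))
      · exact h c hcj
    exact ⟨c, hcj, fun h => hc (by rw [σ.injective (h.trans hi.symm), hi]), hc⟩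
  · exact ⟨i, hij, hi, hi⟩

end Matrix

section Andreief

variable {X : Type*} [MeasurableSpace X] {ι : Type*} [Fintype ι] [DecidableEq ι]

theorem integral_det_mul_det_of_integrable (μ : Measure X) [SigmaFinite μ]
    {a b : ι → X → ℝ}
    (hab : ∀ k l, Integrable (fun t => a k t * b l t) μ) :
    ∫ x : ι → X, (of fun n k => a k (x n)).det * (of fun n k => b k (x n)).det
        ∂(Measure.pi fun _ => μ)
      = ((Fintype.card ι).factorial : ℝ) * (of fun k l => ∫ t, a k t * b l t ∂μ).det := by
  set G : Matrix ι ι ℝ := of fun k l => ∫ t, a k t * b l t ∂μ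
  have hprod (σ τ : Equiv.Perm ι) :
      ∫ x : ι → X, ∏ n, a (σ n) (x n) * b (τ n) (x n) ∂(Measure.pi fun _ => μ)
        = ∏ n, G (σ n) (τ n) :=
    integral_fintype_prod_eq_prod fun n t => a (σ n) t * b (τ n) t
  have hint (σ τ : Equiv.Perm ι) :
      Integrable (fun x : ι → X => ∏ n, a (σ n) (x n) * b (τ n) (x n))
        (Measure.pi fun _ => μ) :=
    Integrable.fintype_prod (f := fun n t => a (σ n) t * b (τ n) t) fun n => hab _ _
  simp_rw [det_mul_det_eq_sum_sum, of_apply]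
  rw [integral_finsetSum _ fun σ _ => integrable_finsetSum _ fun τ _ => (hint σ τ).const_mul _]
  calc ∑ σ : Equiv.Perm ι, ∫ x, ∑ τ : Equiv.Perm ι,
          ((Equiv.Perm.sign σ : ℤ) : ℝ) * (Equiv.Perm.sign τ : ℤ) *
            ∏ n, a (σ n) (x n) * b (τ n) (x n) ∂(Measure.pi fun _ => μ)
      = ∑ σ : Equiv.Perm ι, (Equiv.Perm.sign σ : ℤ) *
          ∑ τ : Equiv.Perm ι, ((Equiv.Perm.sign τ : ℤ) : ℝ) * ∏ n, G (σ n) (τ n) := by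
        refine Finset.sum_congr rfl fun σ _ => ?_
        rw [integral_finsetSum _ fun τ _ => (hint σ τ).const_mul _, Finset.mul_sum]
        refine Finset.sum_congr rfl fun τ _ => ?_
        rw [integral_const_mul, hprod, mul_assoc]
    _ = ∑ _σ : Equiv.Perm ι, G.det := by
        refine Finset.sum_congr rfl fun σ _ => ?_
        rw [sum_sign_mul_prod_perm_eq_sign_mul_det, ← mul_assoc, ← Int.cast_mul,
          ← Units.val_mul, Int.units_mul_self, Units.val_one, Int.cast_one, one_mul]
    _ = _ := by
        rw [Finset.sum_const, Finset.card_univ, Fintype.card_perm, nsmul_eq_mul]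

theorem integral_det_mul_det_of_memLp (μ : Measure X) {a b : ι → X → ℝ}
    (ha : ∀ k, MemLp (a k) 2 μ) (hb : ∀ k, MemLp (b k) 2 μ) :
    ∫ x : ι → X, (of fun n k => a k (x n)).det * (of fun n k => b k (x n)).det
        ∂(Measure.pi fun _ => μ)
      = ((Fintype.card ι).factorial : ℝ) * (of fun k l => ∫ t, a k t * b l t ∂μ).det := by
  obtain ⟨S, hSm, hSσ, haS⟩ :=
    MemLp.exists_common_sigmaFinite_support two_ne_zero ENNReal.ofNat_ne_top ha
  have hgram : ∀ k l, ∫ t in S, a k t * b l t ∂μ = ∫ t, a k t * b l t ∂μ := fun k l =>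
    setIntegral_eq_integral_of_ae_compl_eq_zero <| (haS k).mono fun t ht htS => by
      rw [ht htS, zero_mul]
  have hvanish : ∀ᵐ x ∂(Measure.pi fun _ => μ), x ∉ univ.pi (fun _ : ι => S) →
      (of fun n k => a k (x n)).det * (of fun n k => b k (x n)).det = 0 := by
    have hrow : ∀ᵐ x ∂(Measure.pi fun _ : ι => μ), ∀ n k, x n ∉ S → a k (x n) = 0 :=
      ae_all_iff.2 fun n => ae_all_iff.2 fun k =>
        Measure.tendsto_eval_ae_ae' (μ := fun _ => μ) (haS k)
    filter_upwards [hrow] with x hx hxS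
    obtain ⟨n, hn⟩ : ∃ n, x n ∉ S := by simpa [Set.mem_univ_pi] using hxS
    rw [det_eq_zero_of_row_eq_zero n fun k => hx n k hn, zero_mul]
  rw [← setIntegral_eq_integral_of_ae_compl_eq_zero hvanish,
    Measure.restrict_univ_pi_eq_pi_restrict _ fun _ => hSm,
    integral_det_mul_det_of_integrable _ fun k l =>
      ((ha k).restrict S).integrable_mul ((hb l).restrict S)]
  simp_rw [hgram]

end Andreief

/-- Cross moment of the two first column-replaced determinants, the key identity
for the zero covariance of the EZ coordinates. -/
theorem ez_cross_moment
    {X : Type*} [MeasurableSpace X] (μ : Measure X) (N : ℕ) (hN : 1 < N)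
    (φ : Fin N → X → ℝ) (f : X → ℝ)
    (hf : MemLp f 2 μ) (hφ : ∀ k, MemLp (φ k) 2 μ)
    (horth : ∀ k l, ∫ x, φ k x * φ l x ∂μ = if k = l then (1 : ℝ) else 0) :
    (Nat.factorial N : ℝ)⁻¹ *
      ∫ x : Fin N → X,
        Matrix.det ((Matrix.of fun n k : Fin N => φ k (x n)).updateCol
            ⟨0, Nat.lt_of_lt_of_le Nat.zero_lt_one hN.le⟩ (fun n => f (x n))) *
        Matrix.det ((Matrix.of fun n k : Fin N => φ k (x n)).updateCol
            ⟨1, hN⟩ (fun n => f (x n)))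
        ∂(Measure.pi fun _ => μ)
      = (∫ t, f t * φ ⟨0, Nat.lt_of_lt_of_le Nat.zero_lt_one hN.le⟩ t ∂μ) *
        (∫ t, f t * φ ⟨1, hN⟩ t ∂μ) := by
  set i₀ : Fin N := ⟨0, Nat.lt_of_lt_of_le Nat.zero_lt_one hN.le⟩
  set i₁ : Fin N := ⟨1, hN⟩
  have h01 : i₀ ≠ i₁ := by simp [i₀, i₁, Fin.ext_iff]
  have hupd (i : Fin N) : ∀ k, MemLp (Function.update φ i f k) 2 μ :=
    (Function.forall_update_iff φ fun _ g => MemLp g 2 μ).2 ⟨hf, fun k _ => hφ k⟩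
  simp_rw [updateCol_of_apply]
  rw [integral_det_mul_det_of_memLp μ (hupd i₀) (hupd i₁), Fintype.card_fin,
    det_eq_mul_of_eq_one_outside_row_col h01 fun c d hc hd => by
      simp [Function.update_of_ne hc, Function.update_of_ne hd, horth, one_apply]]
  simp only [of_apply, Function.update_self, Function.update_of_ne h01,
    Function.update_of_ne h01.symm, mul_comm (φ i₁ _)]
  exact inv_mul_cancel_left₀ (Nat.cast_ne_zero.2 N.factorial_ne_zero) _
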